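/- There is a positive continuous function κ on (0,1) with the following property. Let T^(N) be the depth-N truncation of a rooted tree with interaction strengths J_w > 0 and inverse temperature β > 0, fix a vertex v with |v| < N, set θ = θ_v = tanh(β J_v), and let f_θ(x) = log[(cosh(x/2) + θ sinh(x/2)) / (cosh(x/2) − θ sinh(x/2))]. Then, with X_v^(N) the boundary log-likelihood ratio at v and Q_v^{N+} the conditional boundary law given η(v) = +1, one has ∫ f_θ(X_v^(N)) dQ_v^{N+} ≤ θ · m / (1 + κ(θ) m), where m = ∫ X_v^(N) dQ_v^{N+}. -/

import Mathlib

open scoped ENNReal Classical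

noncomputable section

/-- Vertices of the canonical rooted tree: finite sequences of naturals; the root is `[]`. -/
abbrev Vtx := List ℕ

/-- Vertices of the tree determined by the child-count function `c`. -/
inductive IsVtx (c : Vtx → ℕ) : Vtx → Prop
  | root : IsVtx c []
  | child {v : Vtx} {i : ℕ} : IsVtx c v → i < c v → IsVtx c (v ++ [i])

/-- A flow: conservation at every non-root, non-leaf vertex (edges are identified with their
lower endpoints). -/
def IsFlow (c : Vtx → ℕ) (μ : Vtx → ℝ≥0∞) : Prop :=
  ∀ v : Vtx, IsVtx c v → v ≠ [] → c v ≠ 0 →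
    μ v = ∑ i ∈ Finset.range (c v), μ (v ++ [i])

/-- Total flow out of the root. -/
def flowMass (c : Vtx → ℕ) (μ : Vtx → ℝ≥0∞) : ℝ≥0∞ :=
  ∑ i ∈ Finset.range (c []), μ [i]

/-- An infinite ray from the root. -/
def IsRay (c : Vtx → ℕ) (y : ℕ → ℕ) : Prop :=
  ∀ n : ℕ, y n < c ((List.range n).map y)

/-- `V_μ(y) = Σ_{e ∈ y} (μ(e) R(e))^s` along an infinite ray. -/
def rayPot (μ R : Vtx → ℝ≥0∞) (s : ℝ) (y : ℕ → ℕ) : ℝ≥0∞ :=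
  ∑' n : ℕ, (μ ((List.range (n + 1)).map y) * R ((List.range (n + 1)).map y)) ^ s

/-- `V_μ` along the maximal path from the root to a leaf `ℓ`. -/
def leafPot (μ R : Vtx → ℝ≥0∞) (s : ℝ) (ℓ : Vtx) : ℝ≥0∞ :=
  ∑ k ∈ Finset.range ℓ.length, (μ (ℓ.take (k + 1)) * R (ℓ.take (k + 1))) ^ s

/-- `cap_p` of an infinite leafless tree. -/
def capInf (c : Vtx → ℕ) (R : Vtx → ℝ≥0∞) (p : ℝ) : ℝ≥0∞ :=
  sSup {m | ∃ μ : Vtx → ℝ≥0∞, IsFlow c μ ∧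
    (∀ y : ℕ → ℕ, IsRay c y → rayPot μ R (p - 1) y ≤ 1) ∧ m = flowMass c μ}

/-- `cap_p` of a finite tree. -/
def capFin (c : Vtx → ℕ) (R : Vtx → ℝ≥0∞) (p : ℝ) : ℝ≥0∞ :=
  sSup {m | ∃ μ : Vtx → ℝ≥0∞, IsFlow c μ ∧
    (∀ ℓ : Vtx, IsVtx c ℓ → c ℓ = 0 → leafPot μ R (p - 1) ℓ ≤ 1) ∧ m = flowMass c μ}

/-- The set of vertices at distance `n` from the root. -/
def lev (c : Vtx → ℕ) : ℕ → Finset Vtx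
  | 0 => {([] : Vtx)}
  | n + 1 => (lev c n).biUnion fun v => (Finset.range (c v)).image fun i => v ++ [i]

/-- The vertices of the truncated tree `T^(N)`. -/
def verts (c : Vtx → ℕ) (N : ℕ) : Finset Vtx := (Finset.range (N + 1)).biUnion (lev c)

/-- Spin configurations on `T^(N)`. -/
def Conf (c : Vtx → ℕ) (N : ℕ) := {v // v ∈ verts c N} → Bool

instance (c : Vtx → ℕ) (N : ℕ) : Fintype (Conf c N) := by unfold Conf; infer_instance

/-- The ±1 spin of a configuration at a vertex. -/
def spin (c : Vtx → ℕ) (N : ℕ) (σ : Conf c N) (w : Vtx) : ℝ :=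
  if h : w ∈ verts c N then (if σ ⟨w, h⟩ then 1 else -1) else 1

/-- The weight `W(η) = Π_{v → w} exp(β J_w η(v) η(w))` of a configuration on `T^(N)`. -/
def wt (c : Vtx → ℕ) (J : Vtx → ℝ) (β : ℝ) (N : ℕ) (σ : Conf c N) : ℝ :=
  ∏ w ∈ (Finset.range N).biUnion (fun n => lev c (n + 1)),
    Real.exp (β * J w * spin c N σ w.dropLast * spin c N σ w)

/-- `P^(N,+)(η(o) = +1)`: probability of a plus spin at the root under plus boundary
conditions at level `N`. -/
def plusProb (c : Vtx → ℕ) (J : Vtx → ℝ) (β : ℝ) (N : ℕ) : ℝ :=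
  (∑ σ : Conf c N, if (∀ x : {v // v ∈ verts c N}, x.1 ∈ lev c N → σ x = true)
      ∧ spin c N σ [] = 1 then wt c J β N σ else 0) /
  (∑ σ : Conf c N, if (∀ x : {v // v ∈ verts c N}, x.1 ∈ lev c N → σ x = true)
      then wt c J β N σ else 0)

/-- The log-likelihood ratio `log [P(η(root) = +1 | ξ) / P(η(root) = -1 | ξ)]` at the root of
the depth-`M` truncated tree with child counts `c`, interactions `J`, inverse temperature `β`
and boundary condition `ξ` imposed on the level-`M` vertices. -/
def condRatio (c : Vtx → ℕ) (J : Vtx → ℝ) (β : ℝ) (M : ℕ) (ξ : Vtx → Bool) : ℝ :=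
  Real.log
    ((∑ σ : Conf c M, if (∀ x : {v // v ∈ verts c M}, x.1 ∈ lev c M → σ x = ξ x.1)
        ∧ spin c M σ [] = 1 then wt c J β M σ else 0) /
     (∑ σ : Conf c M, if (∀ x : {v // v ∈ verts c M}, x.1 ∈ lev c M → σ x = ξ x.1)
        ∧ spin c M σ [] = -1 then wt c J β M σ else 0))

/-- The child-count function of the subtree `T(v)` rooted at `v`. -/
def subC (c : Vtx → ℕ) (v : Vtx) : Vtx → ℕ := fun w => c (v ++ w)

/-- The interaction strengths of the subtree `T(v)` rooted at `v`. -/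
def subJ (J : Vtx → ℝ) (v : Vtx) : Vtx → ℝ := fun w => J (v ++ w)

/-- The boundary configuration (on level-`M` vertices) induced by a configuration `σ`. -/
def bdOf (c : Vtx → ℕ) (M : ℕ) (σ : Conf c M) : Vtx → Bool :=
  fun w => if h : w ∈ verts c M then σ ⟨w, h⟩ else true

/-- `X_v^(N)`: the log-likelihood ratio at the root of the subtree, as a function of the
boundary of the configuration `σ`. -/
def Xof (c : Vtx → ℕ) (J : Vtx → ℝ) (β : ℝ) (M : ℕ) (σ : Conf c M) : ℝ :=
  condRatio c J β M (bdOf c M σ)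

/-- `f_θ(x) = log[(cosh(x/2) + θ sinh(x/2)) / (cosh(x/2) − θ sinh(x/2))]`. -/
def fbias (θ x : ℝ) : ℝ :=
  Real.log ((Real.cosh (x / 2) + θ * Real.sinh (x / 2)) /
    (Real.cosh (x / 2) - θ * Real.sinh (x / 2)))

/-- The mean `m = ∫ X_v^(N) dQ_v^{N+}` of the boundary log-likelihood ratio under the
conditional boundary law given a plus spin at `v` (the root of the subtree `T^(N)(v)`). -/
def meanPlus (c : Vtx → ℕ) (J : Vtx → ℝ) (β : ℝ) (M : ℕ) (g : ℝ → ℝ) : ℝ :=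
  (∑ σ : Conf c M, if spin c M σ [] = 1 then wt c J β M σ * g (Xof c J β M σ) else 0) /
  (∑ σ : Conf c M, if spin c M σ [] = 1 then wt c J β M σ else 0)

/-!
Write `P⁺` for the boundary law given a plus spin at `v` and `X` for the log-likelihood ratio.
Since `e^X = dP⁺/dP⁻` and the global spin flip carries `P⁻` to `P⁺` and `X` to `-X`, every
odd `g` satisfies `E⁺ g(X) = E⁺[1_{X>0} (1 + e^{-X}) g(X) tanh(X/2)]`, while
`E⁺[1_{X>0} (1 + e^{-X})] ≤ 1`. Hence `E⁺ f_θ(X)` and `m = E⁺ X` are integrals of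
`f_θ(x) tanh(x/2)` and `x tanh(x/2)` against one sub-probability measure on `(0, ∞)`. Pointwise,
`f_θ(x) tanh(x/2) ≤ G(x tanh(x/2))` for the concave `G(y) = θy / (1 + κy)`: near `0` because
`θx - f_θ(x)` grows like `x³`, far out because `f_θ ≤ log((1 + θ)/(1 - θ))`. Integrating the
tangent line of `G` at `m` gives `E⁺ f_θ(X) ≤ G(m)`.
-/

open Real

namespace Real

lemma sinh_le_mul_cosh {y : ℝ} (hy : 0 ≤ y) : sinh y ≤ y * cosh y := by
  have hmono : Monotone fun y => y * cosh y - sinh y := by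
    refine monotone_of_hasDerivAt_nonneg (f' := fun y => y * sinh y) (fun y => ?_) fun y => ?_
    · exact (((hasDerivAt_id' y).mul (hasDerivAt_cosh y)).sub (hasDerivAt_sinh y)).congr_deriv
        (by ring)
    · rcases le_total 0 y with h | h
      · exact mul_nonneg h (sinh_nonneg_iff.2 h)
      · exact mul_nonneg_of_nonpos_of_nonpos h (sinh_nonpos_iff.2 h)
  have h := hmono hy
  simp only [zero_mul, sinh_zero, sub_zero] at h
  linarith

lemma tanh_le_self {y : ℝ} (hy : 0 ≤ y) : tanh y ≤ y := by
  rw [tanh_eq_sinh_div_cosh, div_le_iff₀ (cosh_pos y)]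
  exact sinh_le_mul_cosh hy

lemma tanh_nonneg {y : ℝ} (hy : 0 ≤ y) : 0 ≤ tanh y := by
  rw [tanh_eq_sinh_div_cosh]
  exact div_nonneg (sinh_nonneg_iff.2 hy) (cosh_pos y).le

lemma one_sub_exp_neg_eq (x : ℝ) : 1 - exp (-x) = (1 + exp (-x)) * tanh (x / 2) := by
  have hx : exp (-x) = exp (-(x / 2)) * exp (-(x / 2)) := by rw [← exp_add]; ring_nf
  have hab : exp (x / 2) * exp (-(x / 2)) = 1 := by rw [← exp_add]; simp
  rw [tanh_eq, hx]
  field_simp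
  linear_combination (-2 * exp (-(x / 2))) * hab

lemma tanh_mem_Ioo_of_pos {y : ℝ} (hy : 0 < y) : tanh y ∈ Set.Ioo (0 : ℝ) 1 :=
  ⟨by rw [tanh_eq_sinh_div_cosh]; exact div_pos (sinh_pos_iff.2 hy) (cosh_pos y), tanh_lt_one y⟩

end Real

section FBias

variable {θ : ℝ}

lemma cosh_add_mul_sinh_pos (hθ : |θ| ≤ 1) (u : ℝ) : 0 < cosh u + θ * sinh u := by
  obtain ⟨h₀, h₁⟩ := abs_le.1 hθ
  rcases le_total 0 (sinh u) with hs | hs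
  · nlinarith [cosh_sub_sinh u, exp_pos (-u)]
  · nlinarith [cosh_add_sinh u, exp_pos u]

lemma cosh_sub_mul_sinh_pos (hθ : |θ| ≤ 1) (u : ℝ) : 0 < cosh u - θ * sinh u := by
  simpa [sub_eq_add_neg] using cosh_add_mul_sinh_pos (θ := -θ) (by rwa [abs_neg]) u

lemma fbias_zero : fbias θ 0 = 0 := by simp [fbias]

lemma fbias_neg (x : ℝ) : fbias θ (-x) = -fbias θ x := by
  rw [fbias, fbias, ← Real.log_inv, inv_div, neg_div, cosh_neg, sinh_neg]
  ring_nf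

/-- The denominator is `(cosh + θ sinh) (cosh - θ sinh) = cosh² - θ² sinh²`, rewritten with
`cosh² = 1 + sinh²`. -/
lemma hasDerivAt_fbias (hθ : |θ| ≤ 1) (x : ℝ) :
    HasDerivAt (fbias θ) (θ / (1 + (1 - θ ^ 2) * sinh (x / 2) ^ 2)) x := by
  have hhalf : HasDerivAt (fun y : ℝ => y / 2) (1 / 2) x := by
    simpa using (hasDerivAt_id x).div_const 2
  have hnum : HasDerivAt (fun y => cosh (y / 2) + θ * sinh (y / 2))
      (sinh (x / 2) * (1 / 2) + θ * (cosh (x / 2) * (1 / 2))) x :=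
    hhalf.cosh.add (hhalf.sinh.const_mul θ)
  have hden : HasDerivAt (fun y => cosh (y / 2) - θ * sinh (y / 2))
      (sinh (x / 2) * (1 / 2) - θ * (cosh (x / 2) * (1 / 2))) x :=
    hhalf.cosh.sub (hhalf.sinh.const_mul θ)
  have hlog : fbias θ = fun y => log (cosh (y / 2) + θ * sinh (y / 2)) -
      log (cosh (y / 2) - θ * sinh (y / 2)) := by
    funext y
    exact log_div (cosh_add_mul_sinh_pos hθ _).ne' (cosh_sub_mul_sinh_pos hθ _).ne'
  rw [hlog]
  have h₁ := (cosh_add_mul_sinh_pos hθ (x / 2)).ne'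
  have h₂ := (cosh_sub_mul_sinh_pos hθ (x / 2)).ne'
  refine ((hnum.log h₁).sub (hden.log h₂)).congr_deriv ?_
  have hD : 1 + (1 - θ ^ 2) * sinh (x / 2) ^ 2 ≠ 0 := by
    have : θ ^ 2 ≤ 1 := by nlinarith [abs_le.1 hθ]
    positivity
  rw [div_sub_div _ _ h₁ h₂, div_eq_div_iff (mul_ne_zero h₁ h₂) hD]
  linear_combination θ * (1 - θ ^ 2) * sinh (x / 2) ^ 2 * cosh_sq' (x / 2)

lemma hasDerivAt_mul_sub_fbias (hθ : |θ| ≤ 1) (x : ℝ) :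
    HasDerivAt (fun y => θ * y - fbias θ y)
      (θ * (1 - θ ^ 2) * sinh (x / 2) ^ 2 / (1 + (1 - θ ^ 2) * sinh (x / 2) ^ 2)) x := by
  have hD : 0 < 1 + (1 - θ ^ 2) * sinh (x / 2) ^ 2 := by
    have : θ ^ 2 ≤ 1 := by nlinarith [abs_le.1 hθ]
    positivity
  refine (((hasDerivAt_id' x).const_mul θ).sub (hasDerivAt_fbias hθ x)).congr_deriv ?_
  field_simp
  ring

lemma monotone_mul_sub_fbias (h₀ : 0 ≤ θ) (h₁ : θ ≤ 1) : Monotone fun x => θ * x - fbias θ x :=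
  monotone_of_hasDerivAt_nonneg (hasDerivAt_mul_sub_fbias (abs_le.2 ⟨by linarith, h₁⟩))
    fun x => by
      have : 0 ≤ 1 - θ ^ 2 := by nlinarith
      positivity

lemma fbias_le_mul_self (h₀ : 0 ≤ θ) (h₁ : θ ≤ 1) {x : ℝ} (hx : 0 ≤ x) : fbias θ x ≤ θ * x := by
  have h := monotone_mul_sub_fbias h₀ h₁ hx
  simp only [mul_zero, fbias_zero, sub_zero] at h
  linarith

lemma fbias_nonneg (h₀ : 0 ≤ θ) (h₁ : θ ≤ 1) {x : ℝ} (hx : 0 ≤ x) : 0 ≤ fbias θ x := by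
  have hden := cosh_sub_mul_sinh_pos (abs_le.2 ⟨by linarith, h₁⟩) (x / 2)
  have hs : 0 ≤ sinh (x / 2) := sinh_nonneg_iff.2 (by linarith)
  apply log_nonneg
  rw [le_div_iff₀ hden]
  nlinarith

lemma fbias_le_log (h₀ : 0 ≤ θ) (h₁ : θ < 1) (x : ℝ) :
    fbias θ x ≤ log ((1 + θ) / (1 - θ)) := by
  have hden := cosh_sub_mul_sinh_pos (abs_le.2 ⟨by linarith, h₁.le⟩) (x / 2)
  have hnum := cosh_add_mul_sinh_pos (abs_le.2 ⟨by linarith, h₁.le⟩) (x / 2)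
  have hsc := sinh_lt_cosh (x / 2)
  refine log_le_log (div_pos hnum hden) ?_
  rw [div_le_div_iff₀ hden (by linarith)]
  nlinarith

lemma le_log_one_add_div_one_sub (h₀ : 0 ≤ θ) (h₁ : θ < 1) : θ ≤ log ((1 + θ) / (1 - θ)) := by
  rw [log_div (by linarith) (by linarith)]
  have h₂ := log_le_sub_one_of_pos (show 0 < 1 - θ by linarith)
  have h₃ := log_nonneg (show 1 ≤ 1 + θ by linarith)
  linarith

/-- On `[0, 1]`, `1 + (1 - θ²) sinh² (y / 2) ≤ 5 sinh² (y / 2) / y²` bounds the derivative of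
`θ x - f_θ x` below by `θ (1 - θ²) y² / 5`. -/
lemma cube_le_mul_sub_fbias (h₀ : 0 ≤ θ) (h₁ : θ ≤ 1) {x : ℝ} (hx₀ : 0 ≤ x) (hx₁ : x ≤ 1) :
    θ * (1 - θ ^ 2) / 15 * x ^ 3 ≤ θ * x - fbias θ x := by
  have hθ : |θ| ≤ 1 := abs_le.2 ⟨by linarith, h₁⟩
  have hd : ∀ y, HasDerivAt (fun z => θ * z - fbias θ z - θ * (1 - θ ^ 2) / 15 * z ^ 3)
      (θ * (1 - θ ^ 2) * sinh (y / 2) ^ 2 / (1 + (1 - θ ^ 2) * sinh (y / 2) ^ 2) -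
        θ * (1 - θ ^ 2) / 15 * (3 * y ^ 2)) y := fun y =>
    (hasDerivAt_mul_sub_fbias hθ y).sub
      (((hasDerivAt_pow 3 y).const_mul _).congr_deriv (by ring))
  have hmono : MonotoneOn (fun z => θ * z - fbias θ z - θ * (1 - θ ^ 2) / 15 * z ^ 3)
      (Set.Icc 0 1) := by
    refine monotoneOn_of_hasDerivWithinAt_nonneg (convex_Icc 0 1)
      (fun y _ => (hd y).continuousAt.continuousWithinAt)
      (fun y _ => (hd y).hasDerivWithinAt) fun y hy => ?_
    rw [interior_Icc] at hy
    have hs : y / 2 ≤ sinh (y / 2) := self_le_sinh_iff.2 (by linarith [hy.1])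
    have hθ' : 0 ≤ θ * (1 - θ ^ 2) := mul_nonneg h₀ (by nlinarith)
    have hD : 0 < 1 + (1 - θ ^ 2) * sinh (y / 2) ^ 2 := by
      have : 0 ≤ 1 - θ ^ 2 := by nlinarith
      positivity
    rw [sub_nonneg, le_div_iff₀ hD]
    have hy2 : y ^ 2 * (1 + (1 - θ ^ 2) * sinh (y / 2) ^ 2) ≤ 5 * sinh (y / 2) ^ 2 := by
      have h₂ : y ^ 2 ≤ 4 * sinh (y / 2) ^ 2 := by nlinarith [hy.1]
      have h₃ : y ^ 2 * (1 - θ ^ 2) ≤ 1 := by nlinarith [hy.1, hy.2]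
      nlinarith [mul_le_mul_of_nonneg_right h₃ (sq_nonneg (sinh (y / 2)))]
    nlinarith [mul_le_mul_of_nonneg_left hy2 hθ']
  have h := hmono ⟨le_rfl, zero_le_one⟩ ⟨hx₀, hx₁⟩ hx₀
  simp only [mul_zero, fbias_zero, sub_zero, ne_eq, OfNat.ofNat_ne_zero, not_false_eq_true,
    zero_pow] at h
  linarith

/-- `κ θ = θ² (1 - θ²) / (30 A²)` with `A = log ((1 + θ) / (1 - θ)) = sup f_θ`; the factor
`θ (1 - θ²) / 15` is the cubic rate in `cube_le_mul_sub_fbias`. -/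
def kappa (θ : ℝ) : ℝ := θ ^ 2 * (1 - θ ^ 2) / (30 * log ((1 + θ) / (1 - θ)) ^ 2)

lemma kappa_pos (hθ : θ ∈ Set.Ioo (0 : ℝ) 1) : 0 < kappa θ := by
  obtain ⟨h₀, h₁⟩ := hθ
  have hA := h₀.trans_le (le_log_one_add_div_one_sub h₀.le h₁)
  have : 0 < 1 - θ ^ 2 := by nlinarith
  unfold kappa
  positivity

lemma continuousOn_kappa : ContinuousOn kappa (Set.Ioo 0 1) := by
  have hA : ContinuousOn (fun θ : ℝ => log ((1 + θ) / (1 - θ))) (Set.Ioo 0 1) :=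
    ContinuousOn.log (by fun_prop (disch := intro θ hθ; linarith [hθ.2]))
      fun θ hθ => (div_pos (by linarith [hθ.1]) (by linarith [hθ.2])).ne'
  refine ContinuousOn.div (by fun_prop) (continuousOn_const.mul (hA.pow 2)) fun θ hθ => ?_
  have := hθ.1.trans_le (le_log_one_add_div_one_sub hθ.1.le hθ.2)
  positivity

lemma kappa_mul_mul_fbias_le (hθ : θ ∈ Set.Ioo (0 : ℝ) 1) {x : ℝ} (hx : 0 ≤ x) :
    kappa θ * (x * tanh (x / 2)) * fbias θ x ≤ θ * x - fbias θ x := by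
  obtain ⟨h₀, h₁⟩ := hθ
  have hθA := le_log_one_add_div_one_sub h₀.le h₁
  have hA := h₀.trans_le hθA
  have hκ : kappa θ * (30 * log ((1 + θ) / (1 - θ)) ^ 2) = θ ^ 2 * (1 - θ ^ 2) := by
    unfold kappa
    field_simp
  set A := log ((1 + θ) / (1 - θ))
  have hκ₀ : 0 < kappa θ := kappa_pos ⟨h₀, h₁⟩
  have hc : 0 < θ * (1 - θ ^ 2) := mul_pos h₀ (by nlinarith)
  have hf₀ := fbias_nonneg h₀.le h₁.le hx
  have hfθ := fbias_le_mul_self h₀.le h₁.le hx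
  have hfA : fbias θ x ≤ A := fbias_le_log h₀.le h₁ x
  rcases le_total x 1 with hx₁ | hx₁
  · have hprod : x * tanh (x / 2) * fbias θ x ≤ x * (x / 2) * (θ * x) :=
      mul_le_mul (mul_le_mul_of_nonneg_left (tanh_le_self (by linarith)) hx) hfθ hf₀
        (by positivity)
    have hκθ : kappa θ * θ / 2 ≤ θ * (1 - θ ^ 2) / 15 := by
      refine le_of_mul_le_mul_right ?_ (by positivity : (0 : ℝ) < 30 * A ^ 2)
      calc kappa θ * θ / 2 * (30 * A ^ 2) = θ * (1 - θ ^ 2) * θ ^ 2 / 2 := by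
            linear_combination θ / 2 * hκ
        _ ≤ θ * (1 - θ ^ 2) * A ^ 2 * 2 := by
            nlinarith [mul_le_mul_of_nonneg_left (pow_le_pow_left₀ h₀.le hθA 2) hc.le]
        _ = θ * (1 - θ ^ 2) / 15 * (30 * A ^ 2) := by ring
    calc kappa θ * (x * tanh (x / 2)) * fbias θ x
        ≤ kappa θ * (x * (x / 2) * (θ * x)) := by
          rw [mul_assoc]; exact mul_le_mul_of_nonneg_left hprod hκ₀.le
      _ = kappa θ * θ / 2 * x ^ 3 := by ring
      _ ≤ θ * (1 - θ ^ 2) / 15 * x ^ 3 := mul_le_mul_of_nonneg_right hκθ (by positivity)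
      _ ≤ θ * x - fbias θ x := cube_le_mul_sub_fbias h₀.le h₁.le hx hx₁
  · have hprod : x * tanh (x / 2) * fbias θ x ≤ x * A :=
      mul_le_mul (mul_le_of_le_one_right hx (tanh_lt_one _).le) hfA hf₀ hx
    have hκA : kappa θ * A * x = θ * (1 - θ ^ 2) * (θ * x) / (30 * A) := by
      rw [eq_div_iff (by positivity)]
      linear_combination x * hκ
    calc kappa θ * (x * tanh (x / 2)) * fbias θ x ≤ kappa θ * (x * A) := by
          rw [mul_assoc]; exact mul_le_mul_of_nonneg_left hprod hκ₀.le
      _ = θ * (1 - θ ^ 2) * (θ * x) / (30 * A) := by rw [← hκA]; ring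
      _ ≤ θ * x - fbias θ x := by
          rw [div_le_iff₀ (by positivity)]
          rcases le_total (θ * x) (2 * A) with hθx | hθx
          · have hmono := monotone_mul_sub_fbias h₀.le h₁.le hx₁
            have hcube := cube_le_mul_sub_fbias h₀.le h₁.le zero_le_one le_rfl
            simp only [mul_one, one_pow] at hmono hcube
            nlinarith [mul_le_mul_of_nonneg_left hθx hc.le]
          · have : θ * (1 - θ ^ 2) ≤ 15 * A := by nlinarith
            nlinarith [mul_le_mul_of_nonneg_left this (by positivity : (0 : ℝ) ≤ θ * x)]

/-- The tangent line at `m` of the concave function `y ↦ θ y / (1 + κ y)`. -/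
lemma mul_div_one_add_mul_le_tangent {θ κ y m : ℝ} (hθ : 0 ≤ θ) (hκ : 0 ≤ κ) (hy : 0 ≤ y)
    (hm : 0 ≤ m) :
    θ * y / (1 + κ * y) ≤ θ / (1 + κ * m) ^ 2 * y + θ * κ * m ^ 2 / (1 + κ * m) ^ 2 := by
  have h₁ : 0 < 1 + κ * y := by positivity
  have h₂ : 0 < 1 + κ * m := by positivity
  rw [div_mul_eq_mul_div, ← add_div, div_le_div_iff₀ h₁ (by positivity)]
  nlinarith [mul_nonneg (mul_nonneg hθ hκ) (sq_nonneg (y - m))]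

lemma fbias_mul_one_sub_exp_le (hθ : θ ∈ Set.Ioo (0 : ℝ) 1) {x m : ℝ} (hx : 0 ≤ x)
    (hm : 0 ≤ m) :
    fbias θ x * (1 - exp (-x)) ≤ θ / (1 + kappa θ * m) ^ 2 * (x * (1 - exp (-x))) +
      θ * kappa θ * m ^ 2 / (1 + kappa θ * m) ^ 2 * (1 + exp (-x)) := by
  have hκ := (kappa_pos hθ).le
  have ht := tanh_nonneg (y := x / 2) (by linarith)
  have hy : 0 ≤ x * tanh (x / 2) := mul_nonneg hx ht
  have hD : 0 < 1 + kappa θ * (x * tanh (x / 2)) := by positivity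
  have hP : fbias θ x * tanh (x / 2) ≤
      θ * (x * tanh (x / 2)) / (1 + kappa θ * (x * tanh (x / 2))) := by
    rw [le_div_iff₀ hD]
    nlinarith [kappa_mul_mul_fbias_le hθ hx]
  have hT := hP.trans (mul_div_one_add_mul_le_tangent hθ.1.le hκ hy hm)
  rw [one_sub_exp_neg_eq]
  nlinarith [mul_le_mul_of_nonneg_left hT (by positivity : (0 : ℝ) ≤ 1 + exp (-x))]

end FBias

section LLRSymmetric

variable {ι : Type*} [Fintype ι]

/-- `X` is a log-likelihood ratio `log (dP⁺ / dP⁻)` for the law `P⁺` given by the weights `w`,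
and `P⁻` is the image of `P⁺` under `X ↦ -X`. -/
def IsLLRSymmetric (w X : ι → ℝ) : Prop :=
  ∀ g : ℝ → ℝ, ∑ i, w i * (exp (-X i) * g (-X i)) = ∑ i, w i * g (X i)

variable {w X : ι → ℝ}

lemma IsLLRSymmetric.sum_mul_odd (hsym : IsLLRSymmetric w X) {g : ℝ → ℝ}
    (hg : ∀ x, g (-x) = -g x) :
    ∑ i, w i * g (X i) =
      ∑ i, w i * (if 0 < X i then g (X i) * (1 - exp (-X i)) else 0) := by
  have hg₀ : g 0 = 0 := by linarith [hg 0, neg_zero (G := ℝ) ▸ hg 0]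
  have h := hsym fun x => if x < 0 then g x else 0
  calc ∑ i, w i * g (X i)
      = ∑ i, w i * (if 0 < X i then g (X i) else 0) +
          ∑ i, w i * (if X i < 0 then g (X i) else 0) := by
        rw [← Finset.sum_add_distrib]
        refine Finset.sum_congr rfl fun i _ => ?_
        rcases lt_trichotomy (X i) 0 with hX | hX | hX
        · simp [hX, hX.not_gt]
        · simp [hX, hg₀]
        · simp [hX, hX.not_gt]
    _ = ∑ i, w i * (if 0 < X i then g (X i) else 0) +
          ∑ i, w i * (exp (-X i) * if -X i < 0 then g (-X i) else 0) := by rw [h]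
    _ = _ := by
        rw [← Finset.sum_add_distrib]
        refine Finset.sum_congr rfl fun i _ => ?_
        by_cases hX : 0 < X i
        · simp only [hX, if_true, neg_lt_zero, hg]
          ring
        · simp [hX]

lemma IsLLRSymmetric.sum_mul_one_add_exp_le (hsym : IsLLRSymmetric w X) (hw : ∀ i, 0 ≤ w i) :
    ∑ i, w i * (if 0 < X i then 1 + exp (-X i) else 0) ≤ ∑ i, w i := by
  have h := hsym fun x => if x < 0 then 1 else 0
  calc ∑ i, w i * (if 0 < X i then 1 + exp (-X i) else 0)
      = ∑ i, w i * ((if 0 < X i then 1 else 0) + (exp (-X i) * if -X i < 0 then 1 else 0)) := by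
        refine Finset.sum_congr rfl fun i _ => ?_
        by_cases hX : 0 < X i <;> simp [hX]
    _ = ∑ i, w i * ((if 0 < X i then 1 else 0) + if X i < 0 then 1 else 0) := by
        simp only [mul_add, Finset.sum_add_distrib, h]
    _ ≤ ∑ i, w i := by
        refine Finset.sum_le_sum fun i _ => mul_le_of_le_one_right (hw i) ?_
        rcases lt_trichotomy (X i) 0 with hX | hX | hX
        · simp [hX, hX.not_gt]
        · simp [hX]
        · simp [hX, hX.not_gt]

lemma IsLLRSymmetric.sum_mul_nonneg (hsym : IsLLRSymmetric w X) (hw : ∀ i, 0 ≤ w i) :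
    0 ≤ ∑ i, w i * X i := by
  rw [hsym.sum_mul_odd (g := fun x => x) fun x => rfl]
  refine Finset.sum_nonneg fun i _ => mul_nonneg (hw i) ?_
  split_ifs with hX
  · exact mul_nonneg hX.le (sub_nonneg.2 (exp_le_one_iff.2 (by linarith)))
  · exact le_rfl

lemma IsLLRSymmetric.sum_mul_fbias_le (hsym : IsLLRSymmetric w X) (hw : ∀ i, 0 ≤ w i)
    {θ : ℝ} (hθ : θ ∈ Set.Ioo (0 : ℝ) 1) {m : ℝ} (hm : 0 ≤ m) :
    ∑ i, w i * fbias θ (X i) ≤ θ / (1 + kappa θ * m) ^ 2 * ∑ i, w i * X i +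
      θ * kappa θ * m ^ 2 / (1 + kappa θ * m) ^ 2 * ∑ i, w i := by
  set a := θ / (1 + kappa θ * m) ^ 2
  set b := θ * kappa θ * m ^ 2 / (1 + kappa θ * m) ^ 2
  have hb : 0 ≤ b := by have := (kappa_pos hθ).le; have := hθ.1.le; positivity
  rw [hsym.sum_mul_odd fbias_neg, hsym.sum_mul_odd (g := fun x => x) fun x => rfl]
  calc ∑ i, w i * (if 0 < X i then fbias θ (X i) * (1 - exp (-X i)) else 0)
      ≤ ∑ i, w i * (a * (if 0 < X i then X i * (1 - exp (-X i)) else 0) +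
          b * (if 0 < X i then 1 + exp (-X i) else 0)) := by
        refine Finset.sum_le_sum fun i _ => mul_le_mul_of_nonneg_left ?_ (hw i)
        split_ifs with hX
        · exact fbias_mul_one_sub_exp_le hθ hX.le hm
        · simp
    _ = a * ∑ i, w i * (if 0 < X i then X i * (1 - exp (-X i)) else 0) +
          b * ∑ i, w i * (if 0 < X i then 1 + exp (-X i) else 0) := by
        simp only [mul_add, Finset.sum_add_distrib, Finset.mul_sum]
        congr 1 <;> refine Finset.sum_congr rfl fun i _ => by ring
    _ ≤ _ := add_le_add_right (mul_le_mul_of_nonneg_left (hsym.sum_mul_one_add_exp_le hw) hb) _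

theorem IsLLRSymmetric.sum_mul_fbias_div_le (hsym : IsLLRSymmetric w X) (hw : ∀ i, 0 ≤ w i)
    {θ : ℝ} (hθ : θ ∈ Set.Ioo (0 : ℝ) 1) :
    (∑ i, w i * fbias θ (X i)) / ∑ i, w i ≤
      θ * ((∑ i, w i * X i) / ∑ i, w i) / (1 + kappa θ * ((∑ i, w i * X i) / ∑ i, w i)) := by
  set W := ∑ i, w i
  set m := (∑ i, w i * X i) / W
  have hW : 0 ≤ W := Finset.sum_nonneg fun i _ => hw i
  have hm : 0 ≤ m := div_nonneg (hsym.sum_mul_nonneg hw) hW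
  calc (∑ i, w i * fbias θ (X i)) / W
      ≤ (θ / (1 + kappa θ * m) ^ 2 * ∑ i, w i * X i +
          θ * kappa θ * m ^ 2 / (1 + kappa θ * m) ^ 2 * W) / W :=
        div_le_div_of_nonneg_right (hsym.sum_mul_fbias_le hw hθ hm) hW
    _ = θ / (1 + kappa θ * m) ^ 2 * m + θ * kappa θ * m ^ 2 / (1 + kappa θ * m) ^ 2 * (W / W) := by
        rw [add_div, mul_div_assoc, mul_div_assoc]
    _ ≤ θ / (1 + kappa θ * m) ^ 2 * m + θ * kappa θ * m ^ 2 / (1 + kappa θ * m) ^ 2 := by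
        have : 0 ≤ θ * kappa θ * m ^ 2 / (1 + kappa θ * m) ^ 2 := by
          have := hθ.1.le; have := (kappa_pos hθ).le; positivity
        exact add_le_add_right (mul_le_of_le_one_right this (div_self_le_one W)) _
    _ = θ * m / (1 + kappa θ * m) := by
        field_simp

end LLRSymmetric

section IsingTree

variable {c : Vtx → ℕ} {J : Vtx → ℝ} {β : ℝ} {M : ℕ}

lemma length_of_mem_lev {n : ℕ} {w : Vtx} (h : w ∈ lev c n) : w.length = n := by
  induction n generalizing w with
  | zero => simp_all [lev]
  | succ n ih =>
    simp only [lev, Finset.mem_biUnion, Finset.mem_image, Finset.mem_range] at h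
    obtain ⟨v, hv, i, -, rfl⟩ := h
    simp [ih hv]

lemma dropLast_mem_lev {n : ℕ} {w : Vtx} (h : w ∈ lev c (n + 1)) : w.dropLast ∈ lev c n := by
  simp only [lev, Finset.mem_biUnion, Finset.mem_image, Finset.mem_range] at h
  obtain ⟨v, hv, i, -, rfl⟩ := h
  simpa using hv

lemma lev_subset_verts {n N : ℕ} (h : n ≤ N) : lev c n ⊆ verts c N := fun _ hw =>
  Finset.mem_biUnion.2 ⟨n, Finset.mem_range.2 (Nat.lt_succ_of_le h), hw⟩

lemma nil_mem_verts (c : Vtx → ℕ) (N : ℕ) : ([] : Vtx) ∈ verts c N :=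
  lev_subset_verts (Nat.zero_le N) (by simp [lev])

lemma nil_notMem_lev (hM : 0 < M) : ([] : Vtx) ∉ lev c M := fun h => by
  have := length_of_mem_lev h
  simp only [List.length_nil] at this
  omega

lemma wt_pos (σ : Conf c M) : 0 < wt c J β M σ :=
  Finset.prod_pos fun _ _ => exp_pos _

def Conf.flip (σ : Conf c M) : Conf c M := fun x => !σ x

lemma Conf.flip_bijective : Function.Bijective (Conf.flip (c := c) (M := M)) :=
  Function.Involutive.bijective fun σ => funext fun x => Bool.not_not (σ x)

lemma spin_flip (σ : Conf c M) {w : Vtx} (h : w ∈ verts c M) :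
    spin c M σ.flip w = -spin c M σ w := by
  unfold spin Conf.flip
  rw [dif_pos h, dif_pos h]
  cases σ ⟨w, h⟩ <;> simp

lemma wt_flip (σ : Conf c M) : wt c J β M σ.flip = wt c J β M σ := by
  refine Finset.prod_congr rfl fun w hw => ?_
  obtain ⟨n, hn, hwn⟩ := Finset.mem_biUnion.1 hw
  rw [Finset.mem_range] at hn
  rw [spin_flip σ (lev_subset_verts hn hwn),
    spin_flip σ (lev_subset_verts hn.le (dropLast_mem_lev hwn))]
  ring_nf

variable (c J β M) in
def rootWt (r : ℝ) (σ : Conf c M) : ℝ := if spin c M σ [] = r then wt c J β M σ else 0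

variable (c J β M) in
def bdPartition (r : ℝ) (ξ : Vtx → Bool) : ℝ :=
  ∑ σ : Conf c M, if (∀ x : {v // v ∈ verts c M}, x.1 ∈ lev c M → σ x = ξ x.1) ∧
    spin c M σ [] = r then wt c J β M σ else 0

lemma rootWt_nonneg (r : ℝ) (σ : Conf c M) : 0 ≤ rootWt c J β M r σ := by
  unfold rootWt
  split_ifs
  exacts [(wt_pos σ).le, le_rfl]

lemma rootWt_flip (r : ℝ) (σ : Conf c M) : rootWt c J β M r σ.flip = rootWt c J β M (-r) σ := by
  simp only [rootWt, wt_flip, spin_flip σ (nil_mem_verts c M), neg_eq_iff_eq_neg]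

lemma condRatio_eq_log (ξ : Vtx → Bool) :
    condRatio c J β M ξ = log (bdPartition c J β M 1 ξ / bdPartition c J β M (-1) ξ) := rfl

lemma bdPartition_not (r : ℝ) (ξ : Vtx → Bool) :
    bdPartition c J β M r (fun w => !ξ w) = bdPartition c J β M (-r) ξ := by
  refine Fintype.sum_bijective _ Conf.flip_bijective _ _ fun σ => ?_
  simp only [Conf.flip, wt_flip, spin_flip σ (nil_mem_verts c M), neg_inj, Bool.not_eq_eq_eq_not]

lemma bdPartition_congr {r : ℝ} {ξ ξ' : Vtx → Bool} (h : ∀ w ∈ lev c M, ξ w = ξ' w) :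
    bdPartition c J β M r ξ = bdPartition c J β M r ξ' := by
  refine Finset.sum_congr rfl fun σ _ => if_congr ?_ rfl rfl
  exact and_congr_left' (forall₂_congr fun x hx => by rw [h x.1 hx])

lemma condRatio_congr {ξ ξ' : Vtx → Bool} (h : ∀ w ∈ lev c M, ξ w = ξ' w) :
    condRatio c J β M ξ = condRatio c J β M ξ' := by
  rw [condRatio_eq_log, condRatio_eq_log, bdPartition_congr h, bdPartition_congr h]

lemma condRatio_not (ξ : Vtx → Bool) :
    condRatio c J β M (fun w => !ξ w) = -condRatio c J β M ξ := by
  rw [condRatio_eq_log, condRatio_eq_log, bdPartition_not, bdPartition_not, neg_neg, ← log_inv,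
    inv_div]

lemma bdPartition_one_pos (hM : 0 < M) (ξ : Vtx → Bool) : 0 < bdPartition c J β M 1 ξ := by
  refine Finset.sum_pos' (fun σ _ => ?_) ⟨fun x => if x.1 ∈ lev c M then ξ x.1 else true,
    Finset.mem_univ _, ?_⟩
  · split_ifs
    exacts [(wt_pos σ).le, le_rfl]
  · rw [if_pos ⟨fun x hx => by simp [hx], by simp [spin, nil_mem_verts, nil_notMem_lev hM]⟩]
    exact wt_pos _

lemma bdPartition_neg_one_pos (hM : 0 < M) (ξ : Vtx → Bool) :
    0 < bdPartition c J β M (-1) ξ := by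
  have h := bdPartition_not (c := c) (J := J) (β := β) (M := M) (-1) fun w => !ξ w
  simp only [Bool.not_not, neg_neg] at h
  exact h ▸ bdPartition_one_pos hM _

lemma exp_neg_condRatio_mul (hM : 0 < M) (ξ : Vtx → Bool) :
    exp (-condRatio c J β M ξ) * bdPartition c J β M 1 ξ = bdPartition c J β M (-1) ξ := by
  have hpos := bdPartition_one_pos (c := c) (J := J) (β := β) hM ξ
  have hneg := bdPartition_neg_one_pos (c := c) (J := J) (β := β) hM ξ
  rw [condRatio_eq_log, ← log_inv, inv_div, exp_log (div_pos hneg hpos), div_mul_cancel₀ _ hpos.ne']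

lemma Xof_flip (σ : Conf c M) : Xof c J β M σ.flip = -Xof c J β M σ := by
  rw [Xof, Xof, ← condRatio_not]
  refine condRatio_congr fun w hw => ?_
  have hv := lev_subset_verts le_rfl hw
  simp [bdOf, Conf.flip, hv]

variable (c M) in
def bdTrace (σ : Conf c M) : Vtx → Bool := fun w => if w ∈ lev c M then bdOf c M σ w else true

lemma Xof_eq_condRatio_bdTrace (σ : Conf c M) :
    Xof c J β M σ = condRatio c J β M (bdTrace c M σ) :=
  condRatio_congr fun w hw => by simp [bdTrace, hw]

lemma agrees_bdTrace_iff {σ τ : Conf c M} :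
    (∀ x : {v // v ∈ verts c M}, x.1 ∈ lev c M → σ x = bdTrace c M τ x.1) ↔
      bdTrace c M σ = bdTrace c M τ := by
  constructor
  · intro h
    funext w
    by_cases hw : w ∈ lev c M
    · have hv := lev_subset_verts le_rfl hw
      simpa [bdTrace, bdOf, hw, hv] using h ⟨w, hv⟩ hw
    · simp [bdTrace, hw]
  · intro h x hx
    simpa [bdTrace, bdOf, hx, x.2] using congrFun h x.1

lemma sum_rootWt_mul_bdTrace (r : ℝ) (F : (Vtx → Bool) → ℝ) :
    ∑ σ, rootWt c J β M r σ * F (bdTrace c M σ) =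
      ∑ t ∈ Finset.univ.image (bdTrace c M), bdPartition c J β M r t * F t := by
  refine (Finset.sum_image' _ fun τ _ => ?_).symm
  rw [Finset.sum_filter, bdPartition, Finset.sum_mul]
  refine Finset.sum_congr rfl fun σ _ => ?_
  simp_rw [agrees_bdTrace_iff, rootWt]
  by_cases hb : bdTrace c M σ = bdTrace c M τ
  · by_cases hr : spin c M σ [] = r <;> simp [hb, hr]
  · simp [hb]

lemma sum_rootWt_one_mul_exp (hM : 0 < M) (g : ℝ → ℝ) :
    ∑ σ, rootWt c J β M 1 σ * (exp (-Xof c J β M σ) * g (-Xof c J β M σ)) =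
      ∑ σ, rootWt c J β M (-1) σ * g (-Xof c J β M σ) := by
  simp only [Xof_eq_condRatio_bdTrace]
  refine (sum_rootWt_mul_bdTrace 1 fun t => exp (-condRatio c J β M t) *
    g (-condRatio c J β M t)).trans
    (Eq.trans ?_ (sum_rootWt_mul_bdTrace (-1) fun t => g (-condRatio c J β M t)).symm)
  refine Finset.sum_congr rfl fun t _ => ?_
  rw [← exp_neg_condRatio_mul hM]
  ring

lemma sum_rootWt_neg_one_mul (g : ℝ → ℝ) :
    ∑ σ, rootWt c J β M (-1) σ * g (-Xof c J β M σ) =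
      ∑ σ, rootWt c J β M 1 σ * g (Xof c J β M σ) :=
  Fintype.sum_bijective _ Conf.flip_bijective _ _ fun σ => by
    rw [rootWt_flip, Xof_flip]

lemma isLLRSymmetric_rootWt (hM : 0 < M) :
    IsLLRSymmetric (rootWt c J β M 1) (Xof c J β M) := fun g =>
  (sum_rootWt_one_mul_exp hM g).trans (sum_rootWt_neg_one_mul g)

lemma meanPlus_eq (g : ℝ → ℝ) :
    meanPlus c J β M g =
      (∑ σ, rootWt c J β M 1 σ * g (Xof c J β M σ)) / ∑ σ, rootWt c J β M 1 σ := by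
  simp only [meanPlus, rootWt, ite_mul, zero_mul]

end IsingTree

theorem stmt15 :
    ∃ κ : ℝ → ℝ, ContinuousOn κ (Set.Ioo 0 1) ∧ (∀ θ ∈ Set.Ioo (0 : ℝ) 1, 0 < κ θ) ∧
      ∀ (c : Vtx → ℕ) (J : Vtx → ℝ) (β : ℝ), 0 < β →
        (∀ w, IsVtx c w → w ≠ [] → 0 < J w) →
        ∀ (N : ℕ) (v : Vtx), IsVtx c v → v ≠ [] → v.length < N →
          meanPlus (subC c v) (subJ J v) β (N - v.length)
              (fun t => fbias (Real.tanh (β * J v)) t) ≤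
            Real.tanh (β * J v) *
                meanPlus (subC c v) (subJ J v) β (N - v.length) (fun t => t) /
              (1 + κ (Real.tanh (β * J v)) *
                meanPlus (subC c v) (subJ J v) β (N - v.length) (fun t => t)) := by
  refine ⟨kappa, continuousOn_kappa, fun θ hθ => kappa_pos hθ, ?_⟩
  intro c J β hβ hJ N v hv hv₀ hvN
  have hθ := tanh_mem_Ioo_of_pos (mul_pos hβ (hJ v hv hv₀))
  simp only [meanPlus_eq]
  exact (isLLRSymmetric_rootWt (Nat.sub_pos_of_lt hvN)).sum_mul_fbias_div_le
    (rootWt_nonneg 1) hθ
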